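/- Let q = p^f with p prime, let β be a basis of V = F_q^n, and let φ = φ_β ∈ ΓL_n(q) be the semilinear map applying the Frobenius λ ↦ λ^p to coordinates with respect to β. Assume n ≥ 2 and (n,q) ∉ {(2,2),(2,3)}. Let H ≤ ΓL_n(q) satisfy H ∩ GL_n(q) ≤ Z(GL_n(q)). Then there exists b ∈ GL_n(q) such that every element of b⁻¹Hb has the form φ^i g for some i ∈ {1,…,f} and some scalar matrix g ∈ Z(GL_n(q)); equivalently, b⁻¹Hb ≤ ⟨φ⟩ · Z(GL_n(q)). -/

import Mathlib

open Matrix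

variable (F : Type*) [Field F] [Fintype F] (n : ℕ)

/-- The general linear group `GL_n(F)`, as the unit group of the matrix ring. -/
abbrev GLn := (Matrix (Fin n) (Fin n) F)ˣ

/-- The action of the Galois group (the group of ring automorphisms of `F`) on `GL_n(F)`,
applying a field automorphism entrywise to matrices. -/
def frobAction : RingAut F →* MulAut (GLn F n) :=
  MonoidHom.mk'
    (fun σ => Units.mapEquiv (RingEquiv.mapMatrix σ : Matrix (Fin n) (Fin n) F ≃+* _).toMulEquiv)
    (by
      intro σ τ
      apply MulEquiv.ext
      intro u
      apply Units.ext
      simp [Matrix.ext_iff.symm, Matrix.map_apply])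

/-- `ΓL_n(F) = GL_n(F) ⋊ Gal`, the group of invertible semilinear transformations of
`F^n`, presented (with respect to the standard basis) as the semidirect product of
`GL_n(F)` with the group of field automorphisms of `F`. -/
abbrev GammaL := GLn F n ⋊[frobAction F n] RingAut F

variable {F n}

/-- The natural (semilinear) action of `ΓL_n(F)` on `V = F^n`: the element `⟨m, σ⟩`
sends `v` to `m *ᵥ (σ ∘ v)`. -/
def gamAct (g : GammaL F n) (v : Fin n → F) : Fin n → F :=
  (g.left : Matrix (Fin n) (Fin n) F) *ᵥ fun i => g.right (v i)

variable (F n)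

/-- The subgroup of scalar matrices `Z(GL_n(q))`. -/
def Zsub : Subgroup (GLn F n) :=
  (Units.map ((Matrix.scalar (Fin n) : F →+* Matrix (Fin n) (Fin n) F)).toMonoidHom).range

/-- The copy of `Z(GL_n(q))` inside `ΓL_n(q)`. -/
def ZGamma : Subgroup (GammaL F n) :=
  (Zsub F n).map (SemidirectProduct.inl : GLn F n →* GammaL F n)

/-- The copy of `GL_n(q)` inside `ΓL_n(q)`. -/
def GLGamma : Subgroup (GammaL F n) :=
  (SemidirectProduct.inl : GLn F n →* GammaL F n).range

/-- The copy of `SL_n(q)` inside `ΓL_n(q)`. -/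
def SLGamma : Subgroup (GammaL F n) :=
  ((Units.map (Matrix.detMonoidHom : Matrix (Fin n) (Fin n) F →* F)).ker).map
    (SemidirectProduct.inl : GLn F n →* GammaL F n)

set_option linter.unusedSectionVars false in
lemma frobAction_scalar (σ : RingAut F) (c : Fˣ) :
    (frobAction F n σ)
        ((Units.map ((Matrix.scalar (Fin n) : F →+* Matrix (Fin n) (Fin n) F)).toMonoidHom) c) =
      (Units.map ((Matrix.scalar (Fin n) : F →+* Matrix (Fin n) (Fin n) F)).toMonoidHom)
        ((Units.map σ.toRingHom.toMonoidHom) c) := by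
  apply Units.ext
  simp [frobAction, Matrix.ext_iff.symm, Matrix.map_apply, Matrix.scalar_apply,
    Matrix.diagonal_apply]

instance ZGamma_normal : (ZGamma F n).Normal := by
  constructor
  rintro x hx g
  obtain ⟨z, hz, rfl⟩ := hx
  obtain ⟨c, rfl⟩ := hz
  refine ⟨(Units.map ((Matrix.scalar (Fin n) : F →+* Matrix (Fin n) (Fin n) F)).toMonoidHom)
      ((Units.map (g.right : RingAut F).toRingHom.toMonoidHom) c), ⟨_, rfl⟩, ?_⟩
  have hconj : g * SemidirectProduct.inl
        ((Units.map ((Matrix.scalar (Fin n) : F →+* Matrix (Fin n) (Fin n) F)).toMonoidHom) c) * g⁻¹ =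
      SemidirectProduct.inl (g.left * frobAction F n g.right
        ((Units.map ((Matrix.scalar (Fin n) : F →+* Matrix (Fin n) (Fin n) F)).toMonoidHom) c) *
          g.left⁻¹) := by
    refine SemidirectProduct.ext ?_ (by simp)
    simp [mul_assoc]
  rw [hconj, frobAction_scalar]
  congr 1
  have hcomm : Commute
      ((Units.map ((Matrix.scalar (Fin n) : F →+* Matrix (Fin n) (Fin n) F)).toMonoidHom)
        ((Units.map (g.right : RingAut F).toRingHom.toMonoidHom) c)) g.left := by
    apply Units.ext
    push_cast [Units.val_mul]
    exact (Matrix.scalar_commute _ (fun r' => Commute.all _ _) _)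
  rw [← hcomm.eq, mul_assoc, mul_inv_cancel, mul_one]

/-- The conjugate `H^g = g⁻¹ H g` of a subgroup. -/
def conjS {G : Type*} [Group G] (H : Subgroup G) (g : G) : Subgroup G :=
  H.comap (MulAut.conj g).toMonoidHom

/-- The Frobenius automorphism `λ ↦ λ^p` of the finite field `F`, as a ring automorphism.
Applied coordinatewise via `SemidirectProduct.inr`, it is the standard semilinear map
`φ_β ∈ ΓL_n(q)`. -/
noncomputable def frobRingAut (F : Type*) [Field F] [Finite F] (p : ℕ)
    [Fact p.Prime] [CharP F p] : RingAut F :=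
  RingEquiv.ofBijective (frobenius F p)
    (Finite.injective_iff_bijective.mp (frobenius F p).injective)

section Frob

variable {K : Type*} [Field K] [Fintype K] {p f : ℕ} [Fact p.Prime] [CharP K p]

@[simp] lemma frobRingAut_apply (x : K) : frobRingAut K p x = x ^ p := rfl

lemma frobRingAut_pow_apply (k : ℕ) (x : K) :
    ((frobRingAut K p) ^ k) x = x ^ p ^ k := by
  induction k generalizing x with
  | zero => rw [pow_zero, pow_zero, pow_one]; rfl
  | succ k ih =>
      rw [pow_succ]
      show ((frobRingAut K p) ^ k) (frobRingAut K p x) = _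
      rw [show frobRingAut K p x = x ^ p from rfl, ih (x ^ p), ← pow_mul, ← pow_succ']

lemma frobRingAut_pow_f (hq : Fintype.card K = p ^ f) : frobRingAut K p ^ f = 1 :=
  RingEquiv.ext fun x => by
    rw [frobRingAut_pow_apply, ← hq, FiniteField.pow_card]; rfl

lemma le_of_frob_pow_eq_one (hq : Fintype.card K = p ^ f) {m : ℕ} (hm : 0 < m)
    (h1 : frobRingAut K p ^ m = 1) : f ≤ m := by
  have hp2 : 2 ≤ p := (Fact.out : p.Prime).two_le
  obtain ⟨g, hg⟩ := IsCyclic.exists_generator (α := Kˣ)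
  have hog : orderOf g = Nat.card Kˣ := orderOf_eq_card_of_forall_mem_zpowers hg
  have hx : (g : K) ^ p ^ m = g := by
    have := congrArg (fun σ : RingAut K => σ (g : K)) h1
    simpa [frobRingAut_pow_apply] using this
  have hgu : g ^ p ^ m = g := Units.ext (by push_cast; exact hx)
  have h2 : 2 ≤ p ^ m := by
    calc 2 = 2 ^ 1 := rfl
    _ ≤ p ^ m := Nat.pow_le_pow_left hp2 1 |>.trans (Nat.pow_le_pow_right (by omega) hm)
  have hone : g ^ (p ^ m - 1) = 1 := by
    have hmul : g ^ (p ^ m - 1) * g = 1 * g := by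
      rw [← pow_succ, Nat.sub_add_cancel (by omega), hgu, one_mul]
    exact mul_right_cancel hmul
  have hdvd : orderOf g ∣ p ^ m - 1 := orderOf_dvd_of_pow_eq_one hone
  have hle : Nat.card Kˣ ≤ p ^ m - 1 := hog ▸ Nat.le_of_dvd (by omega) hdvd
  have hcard : Nat.card Kˣ = p ^ f - 1 := by
    rw [Nat.card_units, Nat.card_eq_fintype_card, hq]
  have hpf : 1 ≤ p ^ f := Nat.one_le_pow _ _ (by omega)
  have : p ^ f ≤ p ^ m := by omega
  exact (Nat.pow_le_pow_iff_right (by omega)).mp this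

lemma orderOf_frobRingAut (hq : Fintype.card K = p ^ f) (hf : 0 < f) :
    orderOf (frobRingAut K p) = f := by
  have h1 := frobRingAut_pow_f hq
  have hfin : IsOfFinOrder (frobRingAut K p) :=
    isOfFinOrder_iff_pow_eq_one.mpr ⟨f, hf, h1⟩
  refine le_antisymm (orderOf_le_of_pow_eq_one hf h1) ?_
  exact le_of_frob_pow_eq_one hq hfin.orderOf_pos (pow_orderOf_eq_one _)

lemma ringAut_mem_zpowers_frob (hq : Fintype.card K = p ^ f) (hf : 0 < f)
    (σ : RingAut K) : σ ∈ Subgroup.zpowers (frobRingAut K p) := by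
  classical
  letI : Algebra (ZMod p) K := ZMod.algebra K p
  haveI : Finite (RingAut K) :=
    Finite.of_injective (fun σ : RingAut K => (σ : K → K))
      (fun a b h => RingEquiv.ext (congrFun h))
  have hfr : Module.finrank (ZMod p) K = f := by
    have hc := Module.card_eq_pow_finrank (K := ZMod p) (V := K)
    rw [ZMod.card, hq] at hc
    exact (Nat.pow_right_injective (Fact.out : p.Prime).two_le hc.symm)
  have hcardaut : Nat.card (RingAut K) = f := by
    have hbij : Function.Bijective (fun e : K ≃ₐ[ZMod p] K => (e : RingAut K)) := by
      constructor
      · intro a b h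
        exact AlgEquiv.ext fun x => RingEquiv.congr_fun h x
      · intro σ
        refine ⟨AlgEquiv.ofRingEquiv (f := σ) ?_, by ext; rfl⟩
        intro x
        have : σ.toRingHom.comp (algebraMap (ZMod p) K) = algebraMap (ZMod p) K :=
          Subsingleton.elim _ _
        exact RingHom.congr_fun this x
    rw [← Nat.card_eq_of_bijective _ hbij]
    rw [Nat.card_eq_fintype_card (α := K ≃ₐ[ZMod p] K)]
    rw [← Nat.card_eq_fintype_card, IsGalois.card_aut_eq_finrank, hfr]
  have htop : Subgroup.zpowers (frobRingAut K p) = ⊤ := by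
    apply Subgroup.eq_top_of_card_eq
    rw [Nat.card_zpowers, orderOf_frobRingAut hq hf, hcardaut]
  rw [htop]; trivial

end Frob

lemma IsCyclic.exists_pow_eq' {G : Type*} [Group G] [Finite G] [IsCyclic G]
    (c : G) {d M : ℕ} (hd : c ^ d = 1) (hdM : d * M = Nat.card G) (hd0 : 0 < d) :
    ∃ μ : G, μ ^ M = c := by
  obtain ⟨g, hg⟩ := IsCyclic.exists_generator (α := G)
  have hog : orderOf g = Nat.card G := orderOf_eq_card_of_forall_mem_zpowers hg
  obtain ⟨t, ht⟩ := Subgroup.mem_zpowers_iff.mp (hg c)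
  have hzd : g ^ (t * (d : ℤ)) = 1 := by
    rw [_root_.zpow_mul, ht, zpow_natCast, hd]
  have hdvd : ((d * M : ℕ) : ℤ) ∣ t * d := by
    rw [hdM, ← hog]
    exact orderOf_dvd_iff_zpow_eq_one.mpr hzd
  have hMdvd : (M : ℤ) ∣ t := by
    have h1 : (M : ℤ) * (d : ℤ) ∣ t * d := by
      have : ((d : ℤ) * M) ∣ t * d := by exact_mod_cast hdvd
      rwa [mul_comm (d : ℤ) (M : ℤ)] at this
    exact (mul_dvd_mul_iff_right (by exact_mod_cast hd0.ne' : (d : ℤ) ≠ 0)).mp h1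
  refine ⟨g ^ (t / (M : ℤ)), ?_⟩
  rw [← zpow_natCast (g ^ (t / (M : ℤ))), ← _root_.zpow_mul, Int.ediv_mul_cancel hMdvd, ht]

section MoreHelpers

open SemidirectProduct

variable {F : Type*} [Field F] [Fintype F] {n : ℕ}

lemma frobAction_coe (σ : RingAut F) (u : GLn F n) :
    ((frobAction F n σ u : GLn F n) : Matrix (Fin n) (Fin n) F)
      = (u : Matrix (Fin n) (Fin n) F).map σ := rfl

lemma frobAction_mem_Zsub {σ : RingAut F} {z : GLn F n} (hz : z ∈ Zsub F n) :
    frobAction F n σ z ∈ Zsub F n := by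
  obtain ⟨c, rfl⟩ := hz
  rw [frobAction_scalar]
  exact ⟨_, rfl⟩

lemma gamAct_mul (g g' : GammaL F n) (v : Fin n → F) :
    gamAct (g * g') v = gamAct g (gamAct g' v) := by
  unfold gamAct
  simp only [SemidirectProduct.mul_left, SemidirectProduct.mul_right, Units.val_mul,
    frobAction_coe]
  funext i
  simp only [Matrix.mulVec, dotProduct, Matrix.mul_apply, Matrix.map_apply,
    map_sum, _root_.map_mul, Finset.sum_mul, Finset.mul_sum]
  rw [Finset.sum_comm]
  refine Finset.sum_congr rfl fun j _ => Finset.sum_congr rfl fun k _ => ?_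
  rw [mul_assoc]
  rfl

lemma gamAct_one (v : Fin n → F) : gamAct (1 : GammaL F n) v = v := by
  unfold gamAct
  simp only [SemidirectProduct.one_left, SemidirectProduct.one_right, Units.val_one]
  rw [show (fun i => (1 : RingAut F) (v i)) = v from rfl, Matrix.one_mulVec]

lemma gamAct_pow (g : GammaL F n) (k : ℕ) (v : Fin n → F) :
    (fun w => gamAct g w)^[k] v = gamAct (g ^ k) v := by
  induction k generalizing v with
  | zero => rw [pow_zero, Function.iterate_zero_apply, gamAct_one]
  | succ k ih =>
      rw [Function.iterate_succ_apply', ih, pow_succ', gamAct_mul]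

end MoreHelpers

section EsubSection

variable (F : Type*) [Field F] [Fintype F] (n : ℕ)

/-- The subgroup of `ΓL_n` of elements whose matrix part is scalar. -/
def Esub : Subgroup (GammaL F n) where
  carrier := {g | g.left ∈ Zsub F n}
  one_mem' := by
    show (1 : GammaL F n).left ∈ Zsub F n
    rw [SemidirectProduct.one_left]
    exact one_mem _
  mul_mem' := by
    intro a b ha hb
    show (a * b).left ∈ Zsub F n
    rw [SemidirectProduct.mul_left]
    exact mul_mem ha (frobAction_mem_Zsub hb)
  inv_mem' := by
    intro a ha
    show (a⁻¹).left ∈ Zsub F n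
    rw [SemidirectProduct.inv_left]
    exact frobAction_mem_Zsub (inv_mem ha)

lemma mem_Esub {g : GammaL F n} : g ∈ Esub F n ↔ g.left ∈ Zsub F n := Iff.rfl

end EsubSection


section SpanEigen

set_option linter.unusedSectionVars false

variable {F : Type*} [Field F] [Fintype F] {n : ℕ}

/-- Semilinear map `v ↦ m *ᵥ σ(v)` as an additive hom. -/
def semiT (mm : GLn F n) (σ : RingAut F) : (Fin n → F) →+ (Fin n → F) :=
  AddMonoidHom.mk' (fun v => (mm : Matrix (Fin n) (Fin n) F) *ᵥ fun i => σ (v i))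
    (by
      intro u v
      have : (fun i => σ ((u + v) i)) = (fun i => σ (u i)) + fun i => σ (v i) := by
        funext i; simp [map_add]
      show ((mm : Matrix (Fin n) (Fin n) F) *ᵥ fun i => σ ((u + v) i)) = _
      rw [this, Matrix.mulVec_add])

lemma semiT_apply (mm : GLn F n) (σ : RingAut F) (v : Fin n → F) :
    semiT mm σ v = (mm : Matrix (Fin n) (Fin n) F) *ᵥ fun i => σ (v i) := rfl

lemma semiT_smul (mm : GLn F n) (σ : RingAut F) (x : F) (v : Fin n → F) :
    semiT mm σ (x • v) = σ x • semiT mm σ v := by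
  rw [semiT_apply, semiT_apply]
  have : (fun i => σ ((x • v) i)) = σ x • fun i => σ (v i) := by
    funext i; simp [_root_.map_mul]
  rw [this, Matrix.mulVec_smul]

lemma semiT_eq_gamAct (g : GammaL F n) (v : Fin n → F) :
    semiT g.left g.right v = gamAct g v := rfl

lemma span_eigen (σ : RingAut F) (e : ℕ) (he : 1 ≤ e) (hσe : σ ^ e = 1)
    (hdist : ∀ i j : ℕ, i < e → j < e → (σ ^ i : RingAut F) = σ ^ j → i = j)
    (T : (Fin n → F) →+ (Fin n → F))
    (hsmul : ∀ (x : F) (v : Fin n → F), T (x • v) = σ x • T v)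
    (c μ : F) (hc : c ≠ 0)
    (hTe : ∀ v : Fin n → F, (⇑T)^[e] v = c • v)
    (hnorm : (∏ i ∈ Finset.range e, (σ ^ i : RingAut F) μ) = c) :
    Submodule.span F {v : Fin n → F | T v = μ • v} = ⊤ := by
  classical
  have hμ : μ ≠ 0 := by
    intro h0
    apply hc
    rw [← hnorm]
    exact Finset.prod_eq_zero (Finset.mem_range.mpr he) (by simp [h0])
  set P : ℕ → F := fun i => ∏ j ∈ Finset.range i, (σ ^ j : RingAut F) μ with hP
  have hpow : ∀ (k : ℕ) (x : F), (σ ^ (k + 1) : RingAut F) x = σ ((σ ^ k : RingAut F) x) := by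
    intro k x; rw [pow_succ']; rfl
  have hPsucc : ∀ i, P (i + 1) = μ * σ (P i) := by
    intro i
    have hσP : σ (P i) = ∏ j ∈ Finset.range i, (σ ^ (j + 1) : RingAut F) μ := by
      rw [hP]
      simp only []
      rw [map_prod σ]
      exact Finset.prod_congr rfl fun j _ => (hpow j μ).symm
    have h0 : (σ ^ 0 : RingAut F) μ = μ := by rw [pow_zero]; rfl
    rw [hP]
    simp only []
    rw [Finset.prod_range_succ', h0, mul_comm, hσP]
  have hPne : ∀ i, P i ≠ 0 := by
    intro i
    induction i with
    | zero => simp [hP]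
    | succ i ih =>
        rw [hPsucc]
        exact mul_ne_zero hμ (fun h => ih (by simpa using (EmbeddingLike.map_eq_zero_iff).mp h))
  set t : ℕ → F := fun i => (P i)⁻¹ with ht
  have htsucc : ∀ i, σ (t i) = μ * t (i + 1) := by
    intro i
    rw [ht]
    simp only []
    rw [map_inv₀, hPsucc, mul_inv, ← mul_assoc, mul_inv_cancel₀ hμ, one_mul]
  have ht0 : t 0 = 1 := by simp [ht, hP]
  have hte : t e = c⁻¹ := by rw [ht]; simp only []; rw [hP]; simp only []; rw [hnorm]
  set W : Set (Fin n → F) := {v : Fin n → F | T v = μ • v} with hW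
  have hwmem : ∀ (v : Fin n → F) (lam : F),
      (∑ i ∈ Finset.range e, (((σ ^ i : RingAut F) lam) * t i) • (⇑T)^[i] v) ∈ W := by
    intro v lam
    show T _ = μ • _
    rw [map_sum, Finset.smul_sum]
    obtain ⟨d, rfl⟩ : ∃ d, e = d + 1 := ⟨e - 1, (Nat.succ_pred_eq_of_pos he).symm⟩
    have hterm : ∀ i, T ((((σ ^ i : RingAut F) lam) * t i) • (⇑T)^[i] v)
        = σ (((σ ^ i : RingAut F) lam) * t i) • (⇑T)^[i + 1] v := by
      intro i
      rw [hsmul, Function.iterate_succ_apply']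
    have hstep : ∀ i, σ (((σ ^ i : RingAut F) lam) * t i)
        = μ * (((σ ^ (i + 1) : RingAut F) lam) * t (i + 1)) := by
      intro i
      rw [_root_.map_mul, htsucc, hpow]
      ring
    calc ∑ i ∈ Finset.range (d + 1), T ((((σ ^ i : RingAut F) lam) * t i) • (⇑T)^[i] v)
        = ∑ i ∈ Finset.range (d + 1), σ (((σ ^ i : RingAut F) lam) * t i) • (⇑T)^[i + 1] v := by
          exact Finset.sum_congr rfl fun i _ => hterm i
      _ = ∑ i ∈ Finset.range (d + 1), μ • ((((σ ^ i : RingAut F) lam) * t i) • (⇑T)^[i] v) := by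
          rw [Finset.sum_range_succ, Finset.sum_range_succ']
          congr 1
          · exact Finset.sum_congr rfl fun i _ => by rw [hstep i, ← smul_smul]
          · -- last term of LHS = first term of RHS
            rw [hTe v, Function.iterate_zero_apply, hstep d]
            have h1 : (σ ^ (d + 1) : RingAut F) lam = lam := by rw [hσe]; rfl
            have h2 : (σ ^ 0 : RingAut F) lam = lam := by rw [pow_zero]; rfl
            rw [h1, hte, smul_smul, smul_smul, h2, ht0]
            congr 1
            field_simp
  -- now the span
  rw [eq_top_iff]
  intro v _
  set U : Submodule F (Fin n → F) := Submodule.span F W with hU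
  show v ∈ U
  have hquot : ∀ ψ : Module.Dual F ((Fin n → F) ⧸ U), ψ (U.mkQ v) = 0 := by
    intro ψ
    set χ : Fin e → (Fˣ →* F) := fun i =>
      (((σ ^ (i : ℕ) : RingAut F) : F →+* F) : F →* F).comp (Units.coeHom F) with hχ
    have hχinj : Function.Injective χ := by
      intro i j hij
      apply Fin.ext
      refine hdist i j i.2 j.2 ?_
      apply RingEquiv.ext
      intro x
      rcases eq_or_ne x 0 with rfl | hx
      · rw [map_zero, map_zero]
      · have := DFunLike.congr_fun hij (Units.mk0 x hx)
        simpa [hχ] using this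
    have hli : LinearIndependent F (fun i : Fin e => ⇑(χ i)) :=
      (linearIndependent_monoidHom Fˣ F).comp χ hχinj
    set g : Fin e → F := fun i => t i * ψ (U.mkQ ((⇑T)^[(i : ℕ)] v)) with hgdef
    have hsum : (∑ i : Fin e, g i • ⇑(χ i)) = 0 := by
      funext u
      simp only [Finset.sum_apply, Pi.smul_apply, Pi.zero_apply, smul_eq_mul]
      have h1 : U.mkQ (∑ i ∈ Finset.range e,
          (((σ ^ i : RingAut F) (u : F)) * t i) • (⇑T)^[i] v) = 0 := by
        rw [Submodule.mkQ_apply, Submodule.Quotient.mk_eq_zero]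
        exact Submodule.subset_span (hwmem v u)
      rw [map_sum] at h1
      have h2 := congrArg ψ h1
      rw [map_sum, map_zero] at h2
      rw [Finset.sum_range] at h2
      rw [← h2]
      refine Finset.sum_congr rfl fun i _ => ?_
      rw [_root_.map_smul, _root_.map_smul, smul_eq_mul, hgdef]
      show t ↑i * ψ (U.mkQ ((⇑T)^[↑i] v)) * (σ ^ (↑i : ℕ)) ↑u = _
      ring
    have hzero := Fintype.linearIndependent_iff.mp hli g hsum
    have h0 := hzero ⟨0, he⟩
    rw [hgdef] at h0
    simpa [ht0] using h0
  have hmk : U.mkQ v = 0 := (Module.forall_dual_apply_eq_zero_iff F _).mp hquot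
  rwa [Submodule.mkQ_apply, Submodule.Quotient.mk_eq_zero] at hmk

end SpanEigen

/-- Let `q = p^f`, `n ≥ 2`, `(n,q) ∉ {(2,2),(2,3)}`, and let
`H ≤ ΓL_n(q)` satisfy `H ∩ GL_n(q) ≤ Z(GL_n(q))`.  Then there is `b ∈ GL_n(q)` such that
every element of `b⁻¹Hb` has the form `φ^i g` with `i ∈ {1,…,f}` and `g` scalar, i.e.
`b⁻¹Hb ≤ ⟨φ⟩ · Z(GL_n(q))`. -/
theorem conj_into_frob_scalar {F : Type*} [Field F] [Fintype F] {n p f : ℕ}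
    [Fact p.Prime] [CharP F p] (hq : Fintype.card F = p ^ f)
    (hn : 2 ≤ n)
    (h22 : ¬(n = 2 ∧ Fintype.card F = 2)) (h23 : ¬(n = 2 ∧ Fintype.card F = 3))
    (H : Subgroup (GammaL F n)) (hH : H ⊓ GLGamma F n ≤ ZGamma F n) :
    ∃ b : GLn F n, ∀ h ∈ conjS H (SemidirectProduct.inl b),
      ∃ i : ℕ, 1 ≤ i ∧ i ≤ f ∧ ∃ z ∈ Zsub F n,
        h = (SemidirectProduct.inr (frobRingAut F p) : GammaL F n) ^ i *
              SemidirectProduct.inl z := by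
  classical
  have hp : p.Prime := Fact.out
  have hp2 : 2 ≤ p := hp.two_le
  have hcard2 : 1 < Fintype.card F := Fintype.one_lt_card
  have hf : 0 < f := by
    rcases Nat.eq_zero_or_pos f with rfl | h
    · rw [pow_zero] at hq; omega
    · exact h
  set φ : RingAut F := frobRingAut F p with hφdef
  have hφf : φ ^ f = 1 := frobRingAut_pow_f hq
  have hφord : orderOf φ = f := orderOf_frobRingAut hq hf
  -- the subgroup of exponents
  set K : Subgroup (RingAut F) := H.map SemidirectProduct.rightHom with hK
  set S : AddSubgroup ℤ :=
    { carrier := {j : ℤ | φ ^ j ∈ K}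
      zero_mem' := by
        show φ ^ (0 : ℤ) ∈ K
        rw [zpow_zero]; exact one_mem K
      add_mem' := by
        intro x y hx hy
        show φ ^ (x + y) ∈ K
        rw [_root_.zpow_add]; exact mul_mem hx hy
      neg_mem' := by
        intro x hx
        show φ ^ (-x) ∈ K
        rw [_root_.zpow_neg]; exact inv_mem hx } with hSdef
  obtain ⟨a0, hS⟩ := Int.subgroup_cyclic S
  have hfS : (f : ℤ) ∈ S := by
    show φ ^ ((f : ℕ) : ℤ) ∈ K
    rw [zpow_natCast, hφf]; exact one_mem K
  have ha0f : a0 ∣ (f : ℤ) := by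
    rw [hS, AddSubgroup.mem_closure_singleton] at hfS
    obtain ⟨k, hk⟩ := hfS
    have hk2 : k * a0 = (f : ℤ) := by simpa using hk
    exact ⟨k, by rw [← hk2]; ring⟩
  set a : ℕ := a0.natAbs with hadef
  have ha0 : 0 < a := by
    rcases Nat.eq_zero_or_pos a with h | h
    · exfalso
      have h0 : a0 = 0 := Int.natAbs_eq_zero.mp h
      rw [h0] at ha0f
      have : (f : ℤ) = 0 := zero_dvd_iff.mp ha0f
      omega
    · exact h
  have hadvd : a ∣ f := by
    have h1 := Int.natAbs_dvd_natAbs.mpr ha0f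
    simpa using h1
  set e : ℕ := f / a with hedef
  have hae : a * e = f := Nat.mul_div_cancel' hadvd
  have he1 : 1 ≤ e := by
    rcases Nat.eq_zero_or_pos e with h | h
    · rw [h, mul_zero] at hae; omega
    · exact h
  set σ : RingAut F := φ ^ a with hσdef
  have hσe : σ ^ e = 1 := by rw [hσdef, ← pow_mul, hae, hφf]
  have haS : (a : ℤ) ∈ S := by
    rw [hS, AddSubgroup.mem_closure_singleton]
    rcases Int.natAbs_eq a0 with hc | hc
    · exact ⟨1, by rw [one_zsmul, hadef]; omega⟩
    · exact ⟨-1, by rw [neg_zsmul, one_zsmul, hadef]; omega⟩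
  have hσK : σ ∈ K := by
    have h1 : φ ^ ((a : ℕ) : ℤ) ∈ K := haS
    rwa [zpow_natCast] at h1
  rw [hK, Subgroup.mem_map] at hσK
  obtain ⟨h0, hh0H, hh0r⟩ := hσK
  have hh0right : h0.right = σ := hh0r
  set m : GLn F n := h0.left with hmdef
  -- h0 ^ e is a scalar
  have h0e_gl : (h0 ^ e) ∈ GLGamma F n := by
    rw [GLGamma, SemidirectProduct.range_inl_eq_ker_rightHom, MonoidHom.mem_ker, map_pow,
      hh0r, hσe]
  have h0e_mem : (h0 ^ e) ∈ ZGamma F n := hH (Subgroup.mem_inf.mpr ⟨pow_mem hh0H e, h0e_gl⟩)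
  rw [ZGamma, Subgroup.mem_map] at h0e_mem
  obtain ⟨z0, hz0Z, hz0e⟩ := h0e_mem
  obtain ⟨c, hc⟩ := hz0Z
  have h0e_left : (h0 ^ e).left = z0 := by rw [← hz0e]; rfl
  have h0e_right : (h0 ^ e).right = 1 := by
    have h1 : SemidirectProduct.rightHom (h0 ^ e) = 1 := by rw [map_pow, hh0r, hσe]
    exact h1
  -- σ fixes c
  have hcomm : h0 * h0 ^ e = h0 ^ e * h0 := ((Commute.refl h0).pow_right e).eq
  have hleft : m * frobAction F n σ z0 = z0 * m := by
    have h1 := congrArg SemidirectProduct.left hcomm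
    simpa [SemidirectProduct.mul_left, hh0right, h0e_left, h0e_right] using h1
  have hscal_comm : ∀ (d : Fˣ),
      (Units.map ((Matrix.scalar (Fin n) : F →+* Matrix (Fin n) (Fin n) F)).toMonoidHom d) * m
        = m * (Units.map ((Matrix.scalar (Fin n) : F →+* Matrix (Fin n) (Fin n) F)).toMonoidHom d) := by
    intro d
    apply Units.ext
    push_cast [Units.val_mul]
    exact (Matrix.scalar_commute _ (fun r' => Commute.all _ _) _)
  have hσc : σ (c : F) = (c : F) := by
    have h1 : frobAction F n σ z0
        = Units.map ((Matrix.scalar (Fin n) : F →+* Matrix (Fin n) (Fin n) F)).toMonoidHom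
            (Units.map σ.toRingHom.toMonoidHom c) := by
      rw [← hc, frobAction_scalar]
    have h2 : m * frobAction F n σ z0 = m * z0 := by
      rw [hleft, ← hc, hscal_comm]
    have h3 : frobAction F n σ z0 = z0 := mul_left_cancel h2
    rw [h1, ← hc] at h3
    have h4 := congrArg (fun u : GLn F n =>
      (u : Matrix (Fin n) (Fin n) F) ⟨0, by omega⟩ ⟨0, by omega⟩) h3
    simpa [Matrix.scalar_apply, Matrix.diagonal_apply] using h4
  -- find the eigenvalue via norm surjectivity
  have hpa1 : 1 ≤ p ^ a := Nat.one_le_pow _ _ (by omega)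
  have hpa2 : 2 ≤ p ^ a := le_trans hp2 (Nat.le_self_pow ha0.ne' p)
  have hpf1 : 1 ≤ p ^ f := Nat.one_le_pow _ _ (by omega)
  have hcu : c ^ (p ^ a) = c := by
    apply Units.ext
    push_cast
    have h1 : σ (c : F) = (c : F) ^ p ^ a := by
      rw [hσdef, hφdef]; exact frobRingAut_pow_apply a (c : F)
    rw [← h1, hσc]
  have hcd : c ^ (p ^ a - 1) = 1 := by
    have hmul : c ^ (p ^ a - 1) * c = 1 * c := by
      rw [← pow_succ, Nat.sub_add_cancel (by omega), hcu, one_mul]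
    exact mul_right_cancel hmul
  set M : ℕ := ∑ i ∈ Finset.range e, p ^ (a * i) with hM
  have key : (p ^ a - 1) * M = p ^ f - 1 := by
    have h1 : (((p ^ a - 1) * M : ℕ) : ℤ) = ((p ^ f - 1 : ℕ) : ℤ) := by
      rw [Nat.cast_mul, Nat.cast_sub hpa1, Nat.cast_sub hpf1, hM, Nat.cast_sum]
      push_cast
      rw [mul_comm]
      have h2 : ∀ i ∈ Finset.range e, ((p : ℤ)) ^ (a * i) = ((p : ℤ) ^ a) ^ i := by
        intro i _; rw [← pow_mul]
      rw [Finset.sum_congr rfl h2, geom_sum_mul, ← pow_mul, hae]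
    exact_mod_cast h1
  have hcardu : Nat.card Fˣ = p ^ f - 1 := by
    rw [Nat.card_units, Nat.card_eq_fintype_card, hq]
  obtain ⟨μ, hμM⟩ := IsCyclic.exists_pow_eq' c hcd (by rw [key, hcardu]) (by omega)
  have hσpow : ∀ i : ℕ, (σ ^ i : RingAut F) (μ : F) = (μ : F) ^ p ^ (a * i) := by
    intro i
    rw [hσdef, ← pow_mul, hφdef]
    exact frobRingAut_pow_apply _ _
  have hnorm : (∏ i ∈ Finset.range e, (σ ^ i : RingAut F) (μ : F)) = (c : F) := by
    rw [Finset.prod_congr rfl fun i _ => hσpow i, Finset.prod_pow_eq_pow_sum, ← hM]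
    exact_mod_cast congrArg Units.val hμM
  have hdist : ∀ i j : ℕ, i < e → j < e → (σ ^ i : RingAut F) = σ ^ j → i = j := by
    intro i j hi hj hij
    have h1 : φ ^ (a * i) = φ ^ (a * j) := by
      rw [pow_mul, pow_mul, ← hσdef]; exact hij
    have hma : a * i < f := by rw [← hae]; exact (Nat.mul_lt_mul_left ha0).mpr hi
    have hmb : a * j < f := by rw [← hae]; exact (Nat.mul_lt_mul_left ha0).mpr hj
    have h2 := pow_injOn_Iio_orderOf (x := φ)
      (by rw [hφord]; exact Set.mem_Iio.mpr hma)
      (by rw [hφord]; exact Set.mem_Iio.mpr hmb) h1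
    exact Nat.eq_of_mul_eq_mul_left ha0 h2
  -- iterates of the semilinear map
  have hsemi : (⇑(semiT m σ) : (Fin n → F) → Fin n → F) = fun w => gamAct h0 w := by
    funext w
    rw [semiT_apply]
    unfold gamAct
    rw [hmdef, hh0right]
  have hTe : ∀ v : Fin n → F, (⇑(semiT m σ))^[e] v = (c : F) • v := by
    intro v
    rw [hsemi, gamAct_pow, ← hz0e]
    unfold gamAct
    rw [SemidirectProduct.left_inl, SemidirectProduct.right_inl, ← hc]
    show (Matrix.scalar (Fin n) (c : F)) *ᵥ (fun i => v i) = (c : F) • v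
    funext i
    simp [Matrix.mulVec, dotProduct, Matrix.scalar_apply, Matrix.diagonal_apply,
      Finset.mul_sum, ite_and]
  have hspan := span_eigen σ e he1 hσe hdist (semiT m σ) (semiT_smul m σ)
    (c : F) (μ : F) (Units.ne_zero c) hTe hnorm
  -- extract a basis of eigenvectors
  obtain ⟨s, hsW, hsspan, hsind⟩ :=
    exists_linearIndependent F {v : Fin n → F | semiT m σ v = (μ : F) • v}
  rw [hspan] at hsspan
  have hsfin : s.Finite := hsind.setFinite
  letI := hsfin.fintype
  let bas0 : Module.Basis s F (Fin n → F) :=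
    Module.Basis.mk hsind (by rw [Subtype.range_coe, hsspan])
  have hcards : Fintype.card s = n := by
    rw [← Module.finrank_eq_card_basis bas0, Module.finrank_fin_fun]
  let eqv : Fin n ≃ s := (Fintype.equivFinOfCardEq hcards).symm
  let bas : Module.Basis (Fin n) F (Fin n → F) := bas0.reindex eqv.symm
  have hbasW : ∀ j, semiT m σ (bas j) = (μ : F) • bas j := by
    intro j
    have h1 : bas j = ((eqv j : s) : Fin n → F) := by
      show (bas0.reindex eqv.symm) j = _
      rw [Module.Basis.reindex_apply, Equiv.symm_symm]
      exact Module.Basis.mk_apply _ _ _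
    rw [h1]
    exact hsW (eqv j).2
  set B : Matrix (Fin n) (Fin n) F := (Pi.basisFun F (Fin n)).toMatrix ⇑bas with hB
  haveI : Invertible B := (Pi.basisFun F (Fin n)).invertibleToMatrix bas
  set b : GLn F n := unitOfInvertible B with hbdef
  have hBapply : ∀ i j, B i j = bas j i := by
    intro i j
    rw [hB, Module.Basis.coePiBasisFun.toMatrix_eq_transpose]
    rfl
  have hmatrix : (m : Matrix (Fin n) (Fin n) F) * B.map σ
      = B * Matrix.scalar (Fin n) (μ : F) := by
    ext i j
    have h1 := congrFun (hbasW j) i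
    rw [semiT_apply] at h1
    simp only [Matrix.mulVec, dotProduct, Pi.smul_apply, smul_eq_mul] at h1
    rw [Matrix.mul_apply, Matrix.scalar_apply, Matrix.mul_diagonal]
    calc ∑ k, (m : Matrix (Fin n) (Fin n) F) i k * (B.map σ) k j
        = ∑ k, (m : Matrix (Fin n) (Fin n) F) i k * σ (bas j k) := by
          refine Finset.sum_congr rfl fun k _ => ?_
          rw [Matrix.map_apply, hBapply]
      _ = (μ : F) * bas j i := h1
      _ = B i j * (μ : F) := by rw [hBapply]; ring
  set zμ : GLn F n :=
    Units.map ((Matrix.scalar (Fin n) : F →+* Matrix (Fin n) (Fin n) F)).toMonoidHom μ with hzμ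
  have hunit : m * frobAction F n σ b = b * zμ := by
    apply Units.ext
    push_cast [Units.val_mul]
    rw [frobAction_coe]
    exact hmatrix
  set g0 : GammaL F n := (SemidirectProduct.inl b)⁻¹ * h0 * SemidirectProduct.inl b with hg0
  have hg0left : g0.left = zμ := by
    rw [hg0, ← map_inv]
    rw [show (SemidirectProduct.inl b⁻¹ : GammaL F n) * h0 * SemidirectProduct.inl b
      = SemidirectProduct.inl b⁻¹ * (h0 * SemidirectProduct.inl b) from by group]
    rw [SemidirectProduct.mul_left, SemidirectProduct.mul_left, SemidirectProduct.left_inl,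
      SemidirectProduct.left_inl, SemidirectProduct.right_inl, hh0right]
    rw [_root_.map_one]
    show b⁻¹ * (m * frobAction F n σ b) = zμ
    rw [hunit, ← mul_assoc, inv_mul_cancel, one_mul]
  have hg0E : g0 ∈ Esub F n := by
    rw [mem_Esub, hg0left, hzμ]
    exact ⟨μ, rfl⟩
  -- conclusion
  refine ⟨b, ?_⟩
  intro h hh
  have hh' : SemidirectProduct.inl b * h * (SemidirectProduct.inl b)⁻¹ ∈ H := by
    simpa [conjS, Subgroup.mem_comap, MulAut.conj_apply] using hh
  set h' : GammaL F n := SemidirectProduct.inl b * h * (SemidirectProduct.inl b)⁻¹ with hh'def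
  have hrh : SemidirectProduct.rightHom h' = SemidirectProduct.rightHom h := by
    rw [hh'def]
    simp
  obtain ⟨j, hj⟩ := Subgroup.mem_zpowers_iff.mp
    (ringAut_mem_zpowers_frob hq hf (SemidirectProduct.rightHom h'))
  have hjS : j ∈ S := by
    show φ ^ j ∈ K
    rw [hj, hK]
    exact ⟨h', hh', rfl⟩
  obtain ⟨k, hk⟩ : ∃ k : ℤ, (a : ℤ) * k = j := by
    rw [hS, AddSubgroup.mem_closure_singleton] at hjS
    obtain ⟨k', hk'⟩ := hjS
    rw [zsmul_eq_mul] at hk'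
    rcases Int.natAbs_eq a0 with hcase | hcase
    · refine ⟨k', ?_⟩
      rw [hadef, ← hcase, mul_comm]
      exact hk'
    · refine ⟨-k', ?_⟩
      have hna : ((a0.natAbs : ℤ)) = -a0 := by omega
      rw [hadef, hna, neg_mul_neg, mul_comm]
      exact hk'
  have hrk : SemidirectProduct.rightHom ((h0 : GammaL F n) ^ k) = φ ^ j := by
    rw [map_zpow, hh0r, hσdef, ← zpow_natCast φ a, ← _root_.zpow_mul, hk]
  have hg1H : h' * (h0 ^ k)⁻¹ ∈ H := mul_mem hh' (inv_mem (zpow_mem hh0H k))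
  have hg1GL : h' * (h0 ^ k)⁻¹ ∈ GLGamma F n := by
    rw [GLGamma, SemidirectProduct.range_inl_eq_ker_rightHom, MonoidHom.mem_ker, _root_.map_mul,
      map_inv, hrk, hj, mul_inv_cancel]
  have hg1Z : h' * (h0 ^ k)⁻¹ ∈ ZGamma F n := hH (Subgroup.mem_inf.mpr ⟨hg1H, hg1GL⟩)
  rw [ZGamma, Subgroup.mem_map] at hg1Z
  obtain ⟨z1, hz1Z, hz1⟩ := hg1Z
  have hh'eq : h' = SemidirectProduct.inl z1 * h0 ^ k := by
    rw [hz1, inv_mul_cancel_right]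
  set Φ : MulAut (GammaL F n) := MulAut.conj ((SemidirectProduct.inl b)⁻¹ : GammaL F n) with hΦ
  have hheq2 : h = Φ h' := by
    rw [hΦ, hh'def]
    simp only [MulAut.conj_apply]
    group
  have hbz_comm : ∀ (d : Fˣ),
      (Units.map ((Matrix.scalar (Fin n) : F →+* Matrix (Fin n) (Fin n) F)).toMonoidHom d) * b
        = b * (Units.map ((Matrix.scalar (Fin n) : F →+* Matrix (Fin n) (Fin n) F)).toMonoidHom d) := by
    intro d
    apply Units.ext
    push_cast [Units.val_mul]
    exact (Matrix.scalar_commute _ (fun r' => Commute.all _ _) _)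
  have hΦz : Φ (SemidirectProduct.inl z1) = SemidirectProduct.inl z1 := by
    rw [hΦ]
    simp only [MulAut.conj_apply, inv_inv]
    rw [← map_inv, ← _root_.map_mul, ← _root_.map_mul]
    congr 1
    obtain ⟨c1, hc1⟩ := hz1Z
    rw [← hc1, mul_assoc, hbz_comm c1, ← mul_assoc, inv_mul_cancel, one_mul]
  have hΦh0 : Φ h0 = g0 := by
    rw [hΦ, hg0]
    simp only [MulAut.conj_apply, inv_inv]
  have hhE : h ∈ Esub F n := by
    rw [hheq2, hh'eq, _root_.map_mul, map_zpow, hΦz, hΦh0]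
    refine mul_mem ?_ (zpow_mem hg0E k)
    rw [mem_Esub, SemidirectProduct.left_inl]
    exact hz1Z
  have hhr : SemidirectProduct.rightHom h = φ ^ j := by
    rw [← hrh]
    exact hj.symm
  -- reduce the exponent modulo f
  set r : ℤ := j % (f : ℤ) with hr
  have hfz : (0 : ℤ) < (f : ℤ) := by exact_mod_cast hf
  have hr0 : 0 ≤ r := Int.emod_nonneg j (by omega)
  have hrf : r < (f : ℤ) := Int.emod_lt_of_pos j hfz
  have hφj : φ ^ j = φ ^ r := by
    conv_lhs => rw [show j = (f : ℤ) * (j / (f : ℤ)) + r from (Int.mul_ediv_add_emod j (f : ℤ)).symm]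
    rw [_root_.zpow_add, _root_.zpow_mul, zpow_natCast, hφf, _root_.one_zpow, one_mul]
  set i : ℕ := if r = 0 then f else r.toNat with hi
  have hi1 : 1 ≤ i := by
    rw [hi]
    split
    · omega
    · rename_i hne
      omega
  have hif : i ≤ f := by
    rw [hi]
    split
    · omega
    · omega
  have hφi : φ ^ (i : ℕ) = φ ^ j := by
    rw [hφj, hi]
    split
    · rename_i h0'
      rw [h0', zpow_zero, hφf]
    · rw [← zpow_natCast, Int.toNat_of_nonneg hr0]
  refine ⟨i, hi1, hif, ?_⟩
  set τ : RingAut F := φ ^ (i : ℕ) with hτ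
  have hhright : h.right = τ := by
    rw [hφi, ← hhr]
    rfl
  set z : GLn F n := (frobAction F n τ)⁻¹ h.left with hz
  have hzZ : z ∈ Zsub F n := by
    rw [hz, ← map_inv]
    exact frobAction_mem_Zsub hhE
  refine ⟨z, hzZ, ?_⟩
  have hinr : (SemidirectProduct.inr φ : GammaL F n) ^ (i : ℕ)
      = SemidirectProduct.inr τ := by
    rw [← map_pow, hτ]
  rw [hinr]
  refine SemidirectProduct.ext ?_ ?_
  · rw [SemidirectProduct.mul_left, SemidirectProduct.left_inr, SemidirectProduct.left_inl,
      one_mul, SemidirectProduct.right_inr, hz]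
    exact ((frobAction F n τ).apply_symm_apply h.left).symm
  · rw [SemidirectProduct.mul_right, SemidirectProduct.right_inr, SemidirectProduct.right_inl,
      mul_one, hhright]
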